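/- Symmetrization trick for quadratic forms on a cone: Let K ⊂ R^p be a convex cone and B a symmetric p×p matrix. Then sup_{x,y ∈ K∩S^{p-1}} |x^T B y| ≤ 3 sup_{x ∈ K∩S^{p-1}} |x^T B x|. -/

import Mathlib

open Matrix

/-- Euclidean norm of a vector in `Fin p → ℝ`. -/
noncomputable def vecEnorm {p : ℕ} (v : Fin p → ℝ) : ℝ := Real.sqrt (v ⬝ᵥ v)

/-- The cone-restricted operator seminorm
`‖B‖_C = sup_{x,y ∈ C, ‖x‖=‖y‖=1} |xᵀ B y|`. -/
noncomputable def coneNorm {p : ℕ} (C : Set (Fin p → ℝ)) (B : Matrix (Fin p) (Fin p) ℝ) : ℝ :=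
  sSup {r : ℝ | ∃ x ∈ C, ∃ y ∈ C, vecEnorm x = 1 ∧ vecEnorm y = 1 ∧ r = |x ⬝ᵥ B.mulVec y|}

/-! For unit vectors `x, y` of the cone, polarization gives
`2 xᵀBy = (x+y)ᵀB(x+y) - xᵀBx - yᵀBy`. Since `x + y` lies in the cone and `‖x + y‖ ≤ 2`,
homogeneity bounds the first term by `4D`, where `D` is the supremum of `|zᵀBz|` over unit `z`
of the cone, and the other two by `D` each; hence `|xᵀBy| ≤ 3D`. -/

section vecEnorm

variable {p : ℕ}

theorem vecEnorm_eq_norm (v : Fin p → ℝ) :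
    vecEnorm v = ‖(WithLp.toLp 2 v : EuclideanSpace ℝ (Fin p))‖ := by
  simp [vecEnorm, EuclideanSpace.norm_eq, dotProduct, sq]

theorem vecEnorm_nonneg (v : Fin p → ℝ) : 0 ≤ vecEnorm v := Real.sqrt_nonneg _

theorem vecEnorm_eq_zero {v : Fin p → ℝ} : vecEnorm v = 0 ↔ v = 0 := by
  simp [vecEnorm_eq_norm]

theorem vecEnorm_smul (c : ℝ) (v : Fin p → ℝ) : vecEnorm (c • v) = |c| * vecEnorm v := by
  simp [vecEnorm_eq_norm, WithLp.toLp_smul, norm_smul]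

theorem vecEnorm_add_le (v w : Fin p → ℝ) : vecEnorm (v + w) ≤ vecEnorm v + vecEnorm w := by
  simpa only [vecEnorm_eq_norm, WithLp.toLp_add] using norm_add_le _ _

theorem abs_apply_le_vecEnorm (v : Fin p → ℝ) (i : Fin p) : |v i| ≤ vecEnorm v := by
  simpa [vecEnorm_eq_norm] using PiLp.norm_apply_le (WithLp.toLp 2 v : EuclideanSpace ℝ (Fin p)) i

end vecEnorm

section quadraticForm

variable {p : ℕ}

theorem abs_dotProduct_mulVec_le (B : Matrix (Fin p) (Fin p) ℝ) (x y : Fin p → ℝ) :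
    |x ⬝ᵥ B *ᵥ y| ≤ (∑ i, ∑ j, |B i j|) * (vecEnorm x * vecEnorm y) := by
  have hterm (i j : Fin p) : |x i * (B i j * y j)| ≤ |B i j| * (vecEnorm x * vecEnorm y) := by
    rw [abs_mul, abs_mul, mul_left_comm]
    gcongr
    · exact vecEnorm_nonneg x
    · exact abs_apply_le_vecEnorm x i
    · exact abs_apply_le_vecEnorm y j
  calc |x ⬝ᵥ B *ᵥ y| = |∑ i, ∑ j, x i * (B i j * y j)| := by
        simp only [dotProduct, mulVec, Finset.mul_sum]
    _ ≤ ∑ i, ∑ j, |x i * (B i j * y j)| :=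
        (Finset.abs_sum_le_sum_abs _ _).trans
          (Finset.sum_le_sum fun i _ => Finset.abs_sum_le_sum_abs _ _)
    _ ≤ ∑ i, ∑ j, |B i j| * (vecEnorm x * vecEnorm y) :=
        Finset.sum_le_sum fun i _ => Finset.sum_le_sum fun j _ => hterm i j
    _ = (∑ i, ∑ j, |B i j|) * (vecEnorm x * vecEnorm y) := by
        simp only [Finset.sum_mul]

theorem add_dotProduct_mulVec_add_of_isSymm {B : Matrix (Fin p) (Fin p) ℝ} (hB : B.IsSymm)
    (x y : Fin p → ℝ) :
    (x + y) ⬝ᵥ B *ᵥ (x + y) = x ⬝ᵥ B *ᵥ x + 2 * (x ⬝ᵥ B *ᵥ y) + y ⬝ᵥ B *ᵥ y := by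
  have hyx : y ⬝ᵥ B *ᵥ x = x ⬝ᵥ B *ᵥ y := by
    rw [dotProduct_mulVec, ← mulVec_transpose, hB.eq, dotProduct_comm]
  simp only [mulVec_add, add_dotProduct, dotProduct_add, hyx]
  ring

variable {K : ConvexCone ℝ (Fin p → ℝ)} {B : Matrix (Fin p) (Fin p) ℝ} {D : ℝ}

theorem abs_dotProduct_mulVec_self_le_of_mem
    (hD : ∀ z ∈ K, vecEnorm z = 1 → |z ⬝ᵥ B *ᵥ z| ≤ D) {x : Fin p → ℝ} (hx : x ∈ K) :
    |x ⬝ᵥ B *ᵥ x| ≤ D * vecEnorm x ^ 2 := by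
  rcases (vecEnorm_nonneg x).eq_or_lt with hn | hn
  · simp [vecEnorm_eq_zero.mp hn.symm, vecEnorm]
  set n := vecEnorm x
  have hz : vecEnorm (n⁻¹ • x) = 1 := by
    rw [vecEnorm_smul, abs_of_pos (inv_pos.mpr hn), inv_mul_cancel₀ hn.ne']
  have hzBz := hD _ (K.smul_mem (inv_pos.mpr hn) hx) hz
  rw [mulVec_smul, smul_dotProduct, dotProduct_smul, smul_eq_mul, smul_eq_mul, abs_mul,
    abs_mul, abs_of_pos (inv_pos.mpr hn), ← mul_assoc, ← sq, inv_pow] at hzBz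
  rwa [inv_mul_le_iff₀ (by positivity), mul_comm] at hzBz

theorem abs_dotProduct_mulVec_le_three_mul (hB : B.IsSymm)
    (hD : ∀ z ∈ K, vecEnorm z = 1 → |z ⬝ᵥ B *ᵥ z| ≤ D) {x y : Fin p → ℝ} (hx : x ∈ K)
    (hy : y ∈ K) (hx1 : vecEnorm x = 1) (hy1 : vecEnorm y = 1) :
    |x ⬝ᵥ B *ᵥ y| ≤ 3 * D := by
  have hD0 : 0 ≤ D := (abs_nonneg _).trans (hD x hx hx1)
  have hsum : |(x + y) ⬝ᵥ B *ᵥ (x + y)| ≤ 4 * D := by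
    have hnorm : vecEnorm (x + y) ≤ 2 := by
      linarith [vecEnorm_add_le x y]
    calc |(x + y) ⬝ᵥ B *ᵥ (x + y)| ≤ D * vecEnorm (x + y) ^ 2 :=
          abs_dotProduct_mulVec_self_le_of_mem hD (K.add_mem hx hy)
      _ ≤ D * 2 ^ 2 := by gcongr; exact vecEnorm_nonneg _
      _ = 4 * D := by ring
  rw [add_dotProduct_mulVec_add_of_isSymm hB] at hsum
  obtain ⟨hs₁, hs₂⟩ := abs_le.mp hsum
  obtain ⟨hx₁, hx₂⟩ := abs_le.mp (hD x hx hx1)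
  obtain ⟨hy₁, hy₂⟩ := abs_le.mp (hD y hy hy1)
  rw [abs_le]
  constructor <;> linarith

end quadraticForm

/-- Symmetrization trick: for a convex cone `K` and a symmetric matrix `B`,
`sup_{x,y ∈ K ∩ S} |xᵀ B y| ≤ 3 sup_{x ∈ K ∩ S} |xᵀ B x|`. -/
theorem coneNorm_le_three_mul_diag_sup {p : ℕ}
    (K : ConvexCone ℝ (Fin p → ℝ)) (B : Matrix (Fin p) (Fin p) ℝ) (hB : B.IsSymm) :
    coneNorm (K : Set (Fin p → ℝ)) B ≤
      3 * sSup {r : ℝ | ∃ x ∈ K, vecEnorm x = 1 ∧ r = |x ⬝ᵥ B.mulVec x|} := by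
  set S := {r : ℝ | ∃ x ∈ K, vecEnorm x = 1 ∧ r = |x ⬝ᵥ B.mulVec x|}
  have hbdd : BddAbove S := by
    refine ⟨∑ i, ∑ j, |B i j|, ?_⟩
    rintro _ ⟨x, -, hx1, rfl⟩
    simpa [hx1] using abs_dotProduct_mulVec_le B x x
  have hdiag : ∀ z ∈ K, vecEnorm z = 1 → |z ⬝ᵥ B *ᵥ z| ≤ sSup S :=
    fun z hz hz1 => le_csSup hbdd ⟨z, hz, hz1, rfl⟩
  have hS0 : 0 ≤ sSup S := Real.sSup_nonneg <| by
    rintro _ ⟨x, -, -, rfl⟩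
    exact abs_nonneg _
  refine Real.sSup_le ?_ (by positivity)
  rintro _ ⟨x, hx, y, hy, hx1, hy1, rfl⟩
  exact abs_dotProduct_mulVec_le_three_mul hB hdiag hx hy hx1 hy1
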